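/- arXiv:2410.21100 — 8 statements merged into one kernel-verified Lean document; each statement's English description precedes it below -/
import Mathlib

section
/- Let Q_ε be a symmetric positive definite N×N matrix, p ∈ ℝ^N, and Ω₁ = {w ∈ ℝ^N : w ≥ 0, wᵀ1 = 1, ‖w‖₀ ≤ m}, Ω = {v ∈ ℝ^N : v ≥ 0, ‖v‖₀ ≤ m}. Suppose there exists w̃ ∈ Ω₁ with pᵀw̃ > 0. If v̂ maximizes S(w) = pᵀw / √(wᵀQ_ε w) over Ω₁, then the rescaled vector (pᵀv̂ / (v̂ᵀQ_ε v̂)) · v̂ minimizes f(v) = ½ vᵀQ_ε v − pᵀv over Ω. -/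
/-!
Write `S(w) = pᵀw / √(wᵀQw)`. For every `v ∈ Ω` one has `pᵀv ≤ S(v̂) √(vᵀQv)`: for `v ≠ 0` the
normalisation `v / ∑ vᵢ` lies in `Ω₁` and `S` is invariant under positive scaling. Minimising the
quadratic `½ t² − S(v̂) t` at `t = √(vᵀQv)` then gives `f(v) ≥ −S(v̂)²/2`, and this bound is the value of
`f` at `(pᵀv̂ / v̂ᵀQv̂) v̂`. The existence of `w̃` makes `S(v̂) ≥ 0`, so this rescaling stays in `Ω`.
-/

open Matrix Finset

section SparseSets

variable {ι : Type*} [Fintype ι]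

def sparseOrthant (m : ℕ) : Set (ι → ℝ) :=
  {v | (∀ i, 0 ≤ v i) ∧ (univ.filter fun i => v i ≠ 0).card ≤ m}

def sparseSimplex (m : ℕ) : Set (ι → ℝ) :=
  {w | (∀ i, 0 ≤ w i) ∧ ∑ i, w i = 1 ∧ (univ.filter fun i => w i ≠ 0).card ≤ m}

theorem sparseSimplex_subset_sparseOrthant (m : ℕ) :
    (sparseSimplex m : Set (ι → ℝ)) ⊆ sparseOrthant m :=
  fun _ ⟨hw0, _, hwcard⟩ => ⟨hw0, hwcard⟩

theorem ne_zero_of_mem_sparseSimplex {m : ℕ} {w : ι → ℝ} (hw : w ∈ sparseSimplex m) : w ≠ 0 := by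
  rintro rfl
  simpa using hw.2.1

theorem card_filter_smul_ne_zero_le (c : ℝ) (v : ι → ℝ) :
    (univ.filter fun i => (c • v) i ≠ 0).card ≤ (univ.filter fun i => v i ≠ 0).card :=
  card_le_card <| monotone_filter_right _ fun i _ hcv => by
    simp only [Pi.smul_apply, smul_eq_mul, ne_eq, mul_eq_zero, not_or] at hcv
    exact hcv.2

theorem smul_mem_sparseOrthant {m : ℕ} {c : ℝ} (hc : 0 ≤ c) {v : ι → ℝ}
    (hv : v ∈ sparseOrthant m) : c • v ∈ sparseOrthant m :=
  ⟨fun i => mul_nonneg hc (hv.1 i), (card_filter_smul_ne_zero_le c v).trans hv.2⟩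

theorem sum_pos_of_nonneg_of_ne_zero {v : ι → ℝ} (hv : ∀ i, 0 ≤ v i) (hv0 : v ≠ 0) :
    0 < ∑ i, v i := by
  obtain ⟨i, hi⟩ := Function.ne_iff.1 hv0
  exact sum_pos' (fun j _ => hv j) ⟨i, mem_univ i, (hv i).lt_of_ne' hi⟩

theorem inv_sum_smul_mem_sparseSimplex {m : ℕ} {v : ι → ℝ} (hv : v ∈ sparseOrthant m)
    (hv0 : v ≠ 0) : (∑ i, v i)⁻¹ • v ∈ sparseSimplex m := by
  have hsum := sum_pos_of_nonneg_of_ne_zero hv.1 hv0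
  obtain ⟨hnonneg, hcard⟩ := smul_mem_sparseOrthant (inv_nonneg.2 hsum.le) hv
  refine ⟨hnonneg, ?_, hcard⟩
  simp only [Pi.smul_apply, smul_eq_mul, ← mul_sum]
  exact inv_mul_cancel₀ hsum.ne'

end SparseSets

section SharpeRatio

variable {ι : Type*} [Fintype ι] (Q : Matrix ι ι ℝ) (p : ι → ℝ)

noncomputable def sharpeRatio (w : ι → ℝ) : ℝ :=
  p ⬝ᵥ w / Real.sqrt (w ⬝ᵥ Q *ᵥ w)

noncomputable def meanVariance (v : ι → ℝ) : ℝ :=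
  (1 / 2) * (v ⬝ᵥ Q *ᵥ v) - p ⬝ᵥ v

variable {Q p}

theorem sharpeRatio_mul_sqrt {w : ι → ℝ} (hw : 0 < w ⬝ᵥ Q *ᵥ w) :
    sharpeRatio Q p w * Real.sqrt (w ⬝ᵥ Q *ᵥ w) = p ⬝ᵥ w :=
  div_mul_cancel₀ _ (Real.sqrt_pos.2 hw).ne'

theorem sharpeRatio_smul {c : ℝ} (hc : 0 < c) (w : ι → ℝ) :
    sharpeRatio Q p (c • w) = sharpeRatio Q p w := by
  have hquad : c • w ⬝ᵥ Q *ᵥ (c • w) = c ^ 2 * (w ⬝ᵥ Q *ᵥ w) := by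
    simp only [mulVec_smul, dotProduct_smul, smul_dotProduct, smul_eq_mul]
    ring
  rw [sharpeRatio, sharpeRatio, hquad, Real.sqrt_mul (sq_nonneg c), Real.sqrt_sq hc.le,
    dotProduct_smul, smul_eq_mul, mul_div_mul_left _ _ hc.ne']

theorem meanVariance_smul_self {w : ι → ℝ} (hw : 0 < w ⬝ᵥ Q *ᵥ w) :
    meanVariance Q p ((p ⬝ᵥ w / (w ⬝ᵥ Q *ᵥ w)) • w) = -(sharpeRatio Q p w ^ 2 / 2) := by
  rw [meanVariance, sharpeRatio, div_pow, Real.sq_sqrt hw.le]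
  simp only [mulVec_smul, dotProduct_smul, smul_dotProduct, smul_eq_mul]
  field_simp
  ring

theorem neg_sq_half_le_half_sub {a b s : ℝ} (ha : 0 ≤ a) (hb : b ≤ s * Real.sqrt a) :
    -(s ^ 2 / 2) ≤ (1 / 2) * a - b := by
  nlinarith [sq_nonneg (Real.sqrt a - s), Real.sq_sqrt ha]

theorem neg_sq_half_le_meanVariance (hQ : Q.PosSemidef) {v : ι → ℝ} {s : ℝ}
    (hv : p ⬝ᵥ v ≤ s * Real.sqrt (v ⬝ᵥ Q *ᵥ v)) : -(s ^ 2 / 2) ≤ meanVariance Q p v :=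
  neg_sq_half_le_half_sub (by simpa using hQ.dotProduct_mulVec_nonneg v) hv

theorem dotProduct_le_mul_sqrt_of_mem_sparseOrthant (hQ : Q.PosDef) {m : ℕ} {s : ℝ}
    (hs : ∀ w ∈ sparseSimplex m, sharpeRatio Q p w ≤ s) {v : ι → ℝ} (hv : v ∈ sparseOrthant m) :
    p ⬝ᵥ v ≤ s * Real.sqrt (v ⬝ᵥ Q *ᵥ v) := by
  rcases eq_or_ne v 0 with rfl | hv0
  · simp
  have hquad : 0 < v ⬝ᵥ Q *ᵥ v := by simpa using hQ.dotProduct_mulVec_pos hv0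
  have hsum : 0 < (∑ i, v i)⁻¹ := inv_pos.2 (sum_pos_of_nonneg_of_ne_zero hv.1 hv0)
  have hSv : sharpeRatio Q p v ≤ s := by
    rw [← sharpeRatio_smul hsum]
    exact hs _ (inv_sum_smul_mem_sparseSimplex hv hv0)
  rw [← sharpeRatio_mul_sqrt hquad]
  exact mul_le_mul_of_nonneg_right hSv (Real.sqrt_nonneg _)

end SharpeRatio

theorem stmt_0 (N m : ℕ) (Q : Matrix (Fin N) (Fin N) ℝ) (hQ : Q.PosDef)
    (p : Fin N → ℝ)
    (Ω₁ Ω : Set (Fin N → ℝ))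
    (hΩ₁ : Ω₁ = {w | (∀ i, 0 ≤ w i) ∧ (∑ i, w i) = 1 ∧
        (Finset.univ.filter fun i => w i ≠ 0).card ≤ m})
    (hΩ : Ω = {v | (∀ i, 0 ≤ v i) ∧ (Finset.univ.filter fun i => v i ≠ 0).card ≤ m})
    (hexist : ∃ w ∈ Ω₁, 0 < p ⬝ᵥ w)
    (vh : Fin N → ℝ) (hv : vh ∈ Ω₁)
    (hmax : ∀ w ∈ Ω₁,
      p ⬝ᵥ w / Real.sqrt (w ⬝ᵥ Q.mulVec w) ≤ p ⬝ᵥ vh / Real.sqrt (vh ⬝ᵥ Q.mulVec vh)) :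
    (p ⬝ᵥ vh / (vh ⬝ᵥ Q.mulVec vh)) • vh ∈ Ω ∧
    ∀ v ∈ Ω,
      (1/2) * (((p ⬝ᵥ vh / (vh ⬝ᵥ Q.mulVec vh)) • vh) ⬝ᵥ Q.mulVec ((p ⬝ᵥ vh / (vh ⬝ᵥ Q.mulVec vh)) • vh))
        - p ⬝ᵥ ((p ⬝ᵥ vh / (vh ⬝ᵥ Q.mulVec vh)) • vh)
      ≤ (1/2) * (v ⬝ᵥ Q.mulVec v) - p ⬝ᵥ v := by
  change Ω₁ = sparseSimplex m at hΩ₁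
  change Ω = sparseOrthant m at hΩ
  subst hΩ₁ hΩ
  change ∀ w ∈ sparseSimplex m, sharpeRatio Q p w ≤ sharpeRatio Q p vh at hmax
  have hquad : 0 < vh ⬝ᵥ Q *ᵥ vh := by
    simpa using hQ.dotProduct_mulVec_pos (ne_zero_of_mem_sparseSimplex hv)
  have hS : 0 ≤ sharpeRatio Q p vh := by
    obtain ⟨w, hw, hpw⟩ := hexist
    exact (div_nonneg hpw.le (Real.sqrt_nonneg _)).trans (hmax w hw)
  have hpv : 0 ≤ p ⬝ᵥ vh := sharpeRatio_mul_sqrt hquad ▸ mul_nonneg hS (Real.sqrt_nonneg _)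
  refine ⟨smul_mem_sparseOrthant (div_nonneg hpv hquad.le) (sparseSimplex_subset_sparseOrthant m hv),
    fun v hvΩ => ?_⟩
  change meanVariance Q p _ ≤ meanVariance Q p v
  rw [meanVariance_smul_self hquad]
  exact neg_sq_half_le_meanVariance hQ.posSemidef
    (dotProduct_le_mul_sqrt_of_mem_sparseOrthant hQ hmax hvΩ)
end

section
/- Let Q_ε be symmetric positive definite, p ∈ ℝ^N, Ω = {v ≥ 0 : ‖v‖₀ ≤ m}, and Ω₁ = {w ∈ Ω : wᵀ1 = 1}. Suppose there exists w̃ ∈ Ω₁ with pᵀw̃ > 0. If v̂ minimizes f(v) = ½ vᵀQ_ε v − pᵀv over Ω, then v̂ ≠ 0 and the normalization v̂ / (v̂ᵀ1) maximizes S(w) = pᵀw / √(wᵀQ_ε w) over Ω₁. -/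
/-!
The feasible set `Ω` is a cone, so minimising `f v = ½ vᵀQv - pᵀv` over `Ω` splits into a
direction `w ∈ Ω₁` and a scale `t ≥ 0`. Along the ray through `w`, `f (t • w)` is a quadratic in
`t` whose minimum over `t ≥ 0` is `-(pᵀw)² / (2 wᵀQw)` when `pᵀw ≥ 0`. Hence the minimiser `v̂`
points in the direction `ŵ` maximising `(pᵀw)² / wᵀQw` among directions with `pᵀw ≥ 0`, i.e.
maximising the Sharpe ratio `S`. A direction with `pᵀw̃ > 0` makes `f v̂ < 0`, which rules out
`v̂ = 0` and forces `pᵀŵ > 0`.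
-/

open Matrix Finset

lemma neg_sq_div_le_quadratic {q : ℝ} (hq : 0 < q) (r t : ℝ) :
    -(r ^ 2 / q) / 2 ≤ t ^ 2 / 2 * q - t * r := by
  have h : t ^ 2 / 2 * q - t * r + (r ^ 2 / q) / 2 = (t * q - r) ^ 2 / (2 * q) := by
    field_simp
    ring
  have : 0 ≤ (t * q - r) ^ 2 / (2 * q) := by positivity
  linarith

lemma quadratic_div_eq {q : ℝ} (hq : 0 < q) (r : ℝ) :
    (r / q) ^ 2 / 2 * q - r / q * r = -(r ^ 2 / q) / 2 := by
  field_simp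
  ring

lemma div_sqrt_le_div_sqrt {r r' q q' : ℝ} (hr : 0 ≤ r) (hr' : 0 ≤ r')
    (h : r ^ 2 / q ≤ r' ^ 2 / q') : r / √q ≤ r' / √q' := by
  rw [← Real.sqrt_sq hr, ← Real.sqrt_sq hr', ← Real.sqrt_div (sq_nonneg r),
    ← Real.sqrt_div (sq_nonneg r')]
  exact Real.sqrt_le_sqrt h

section

variable {n : Type*} [Fintype n]

noncomputable def quadObjective (Q : Matrix n n ℝ) (p v : n → ℝ) : ℝ :=
  (1 / 2) * (v ⬝ᵥ Q *ᵥ v) - p ⬝ᵥ v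

lemma quadObjective_smul (Q : Matrix n n ℝ) (p w : n → ℝ) (t : ℝ) :
    quadObjective Q p (t • w) = t ^ 2 / 2 * (w ⬝ᵥ Q *ᵥ w) - t * (p ⬝ᵥ w) := by
  simp only [quadObjective, mulVec_smul, dotProduct_smul, smul_dotProduct, smul_eq_mul]
  ring

lemma neg_sq_div_le_quadObjective_smul {Q : Matrix n n ℝ} (p : n → ℝ) {w : n → ℝ}
    (hq : 0 < w ⬝ᵥ Q *ᵥ w) (t : ℝ) :
    -((p ⬝ᵥ w) ^ 2 / (w ⬝ᵥ Q *ᵥ w)) / 2 ≤ quadObjective Q p (t • w) := by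
  rw [quadObjective_smul]
  exact neg_sq_div_le_quadratic hq _ _

/-- Compare with the point of the ray through `w` at scale `t = pᵀw / wᵀQw`, which lies in the
cone because `pᵀw ≥ 0`. -/
lemma IsMinOn.quadObjective_le {Q : Matrix n n ℝ} {p : n → ℝ} {K : Set (n → ℝ)}
    (hK : ∀ w ∈ K, ∀ t : ℝ, 0 ≤ t → t • w ∈ K) {v w : n → ℝ}
    (hmin : IsMinOn (quadObjective Q p) K v) (hw : w ∈ K) (hq : 0 < w ⬝ᵥ Q *ᵥ w)
    (hr : 0 ≤ p ⬝ᵥ w) :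
    quadObjective Q p v ≤ -((p ⬝ᵥ w) ^ 2 / (w ⬝ᵥ Q *ᵥ w)) / 2 := by
  have h := isMinOn_iff.mp hmin _ (hK w hw _ (div_nonneg hr hq.le))
  rwa [quadObjective_smul, quadratic_div_eq hq] at h

lemma dotProduct_pos_of_quadObjective_neg {Q : Matrix n n ℝ} {p v : n → ℝ}
    (hQ : 0 ≤ v ⬝ᵥ Q *ᵥ v) (h : quadObjective Q p v < 0) : 0 < p ⬝ᵥ v := by
  unfold quadObjective at h
  linarith

lemma sum_inv_smul_self {v : n → ℝ} (h : ∑ i, v i ≠ 0) : ∑ i, ((∑ j, v j)⁻¹ • v) i = 1 := by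
  simp only [Pi.smul_apply, smul_eq_mul, ← mul_sum]
  exact inv_mul_cancel₀ h

def sparseNonneg (m : ℕ) : Set (n → ℝ) :=
  {v | (∀ i, 0 ≤ v i) ∧ (univ.filter fun i => v i ≠ 0).card ≤ m}

lemma smul_mem_sparseNonneg {m : ℕ} {w : n → ℝ} (hw : w ∈ sparseNonneg m) {t : ℝ}
    (ht : 0 ≤ t) : t • w ∈ sparseNonneg m := by
  refine ⟨fun i => mul_nonneg ht (hw.1 i), le_trans (card_le_card ?_) hw.2⟩
  intro i hi
  simp only [mem_filter, mem_univ, true_and, Pi.smul_apply, smul_eq_mul] at hi ⊢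
  exact fun h => hi (by rw [h, mul_zero])

end

theorem stmt_1 (N m : ℕ) (Q : Matrix (Fin N) (Fin N) ℝ) (hQ : Q.PosDef)
    (p : Fin N → ℝ)
    (Ω Ω₁ : Set (Fin N → ℝ))
    (hΩ : Ω = {v | (∀ i, 0 ≤ v i) ∧ (Finset.univ.filter fun i => v i ≠ 0).card ≤ m})
    (hΩ₁ : Ω₁ = {w ∈ Ω | (∑ i, w i) = 1})
    (hexist : ∃ w ∈ Ω₁, 0 < p ⬝ᵥ w)
    (vh : Fin N → ℝ) (hv : vh ∈ Ω)
    (hmin : ∀ v ∈ Ω,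
      (1/2) * (vh ⬝ᵥ Q.mulVec vh) - p ⬝ᵥ vh ≤ (1/2) * (v ⬝ᵥ Q.mulVec v) - p ⬝ᵥ v) :
    vh ≠ 0 ∧ (∑ i, vh i)⁻¹ • vh ∈ Ω₁ ∧
    ∀ w ∈ Ω₁,
      p ⬝ᵥ w / Real.sqrt (w ⬝ᵥ Q.mulVec w) ≤
        p ⬝ᵥ ((∑ i, vh i)⁻¹ • vh) /
          Real.sqrt (((∑ i, vh i)⁻¹ • vh) ⬝ᵥ Q.mulVec ((∑ i, vh i)⁻¹ • vh)) := by
  change Ω = sparseNonneg (n := Fin N) m at hΩ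
  subst hΩ hΩ₁
  replace hmin : IsMinOn (quadObjective Q p) (sparseNonneg m) vh := isMinOn_iff.mpr hmin
  have hcone : ∀ w ∈ sparseNonneg (n := Fin N) m, ∀ t : ℝ, 0 ≤ t → t • w ∈ sparseNonneg m :=
    fun w hw t ht => smul_mem_sparseNonneg hw ht
  have hq : ∀ w : Fin N → ℝ, ∑ i, w i = 1 → 0 < w ⬝ᵥ Q *ᵥ w := fun w hw => by
    simpa using hQ.dotProduct_mulVec_pos (x := w) (by rintro rfl; simp at hw)
  obtain ⟨w₀, ⟨hw₀, hw₀1⟩, hpw₀⟩ := hexist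
  have hneg : quadObjective Q p vh < 0 := by
    have hqw₀ := hq w₀ hw₀1
    have : 0 < (p ⬝ᵥ w₀) ^ 2 / (w₀ ⬝ᵥ Q *ᵥ w₀) := by positivity
    linarith [hmin.quadObjective_le hcone hw₀ hqw₀ hpw₀.le]
  have hpvh : 0 < p ⬝ᵥ vh := dotProduct_pos_of_quadObjective_neg
    (by simpa using hQ.posSemidef.dotProduct_mulVec_nonneg vh) hneg
  have hvh : vh ≠ 0 := by
    rintro rfl
    simp at hpvh
  have hτ : 0 < ∑ i, vh i := Fintype.sum_pos (lt_of_le_of_ne hv.1 hvh.symm)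
  set ŵ := (∑ i, vh i)⁻¹ • vh
  have hŵ1 : ∑ i, ŵ i = 1 := sum_inv_smul_self hτ.ne'
  have hqŵ := hq ŵ hŵ1
  have hpŵ : 0 < p ⬝ᵥ ŵ := by
    simp only [ŵ, dotProduct_smul, smul_eq_mul]
    positivity
  have hlower := (smul_inv_smul₀ hτ.ne' vh).symm ▸ neg_sq_div_le_quadObjective_smul p hqŵ _
  refine ⟨hvh, ⟨smul_mem_sparseNonneg hv (inv_nonneg.mpr hτ.le), hŵ1⟩, fun w ⟨hw, hw1⟩ => ?_⟩
  rcases le_or_gt (p ⬝ᵥ w) 0 with hpw | hpw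
  · exact (div_nonpos_of_nonpos_of_nonneg hpw (Real.sqrt_nonneg _)).trans (by positivity)
  · have hupper := hmin.quadObjective_le hcone hw (hq w hw1) hpw.le
    exact div_sqrt_le_div_sqrt hpw.le hpŵ.le (by linarith)
end

section
/- Let Ω = {v ∈ ℝ^N : v ≥ 0, ‖v‖₀ ≤ m} and v ∈ ℝ^N. Define h by keeping the m largest positive components of v (all positive components if there are at most m) and setting all other components to 0. Then h is a nearest point of Ω to v: ‖h − v‖₂ ≤ ‖u − v‖₂ for all u ∈ Ω. -/
open Matrix Finset

theorem stmt_5 (N m : ℕ)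
    (Ω : Set (Fin N → ℝ))
    (hΩ : Ω = {v | (∀ i, 0 ≤ v i) ∧ (Finset.univ.filter fun i => v i ≠ 0).card ≤ m})
    (v h : Fin N → ℝ) (J : Finset (Fin N))
    (hJpos : ∀ i ∈ J, 0 < v i)
    (hJtop : ∀ i ∈ J, ∀ j ∉ J, v j ≤ v i)
    (hJcard : J.card = min m (Finset.univ.filter fun i => 0 < v i).card)
    (hh : ∀ i, h i = if i ∈ J then v i else 0) :
    h ∈ Ω ∧ ∀ u ∈ Ω,
      Real.sqrt (∑ i, (h i - v i)^2) ≤ Real.sqrt (∑ i, (u i - v i)^2) := by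
  subst hΩ
  constructor
  · refine ⟨fun i => ?_, ?_⟩
    · rw [hh]
      split
      · exact le_of_lt (hJpos _ ‹_›)
      · exact le_refl 0
    · calc (univ.filter fun i => h i ≠ 0).card ≤ J.card := by
            apply Finset.card_le_card
            intro i hi
            simp only [Finset.mem_filter, hh] at hi
            by_contra hiJ
            rw [if_neg hiJ] at hi
            exact hi.2 rfl
        _ ≤ m := by rw [hJcard]; exact min_le_left _ _
  · intro u hu
    obtain ⟨hu0, hucard⟩ := hu
    apply Real.sqrt_le_sqrt
    set P : Finset (Fin N) := univ.filter fun i => 0 < v i with hP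
    set K : Finset (Fin N) := (univ.filter fun i => u i ≠ 0) ∩ P with hK
    have hKP : K ⊆ P := Finset.inter_subset_right
    have hJP : J ⊆ P := fun i hi => by simp [hP, hJpos i hi]
    have hKJcard : K.card ≤ J.card := by
      rw [hJcard]
      exact le_min (le_trans (Finset.card_le_card Finset.inter_subset_left) hucard)
        (Finset.card_le_card hKP)
    -- key comparison of sums over K and J
    have hsumKJ : ∑ i ∈ K, v i ^ 2 ≤ ∑ i ∈ J, v i ^ 2 := by
      rcases Finset.eq_empty_or_nonempty (K \ J) with hKJ | hKJ
      · have hsub : K ⊆ J := Finset.sdiff_eq_empty_iff_subset.mp hKJ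
        exact Finset.sum_le_sum_of_subset_of_nonneg hsub (fun i _ _ => sq_nonneg _)
      · have hJK : (J \ K).Nonempty := by
          rw [← Finset.card_pos] at hKJ ⊢
          have h1 := Finset.card_sdiff_add_card_inter K J
          have h2 := Finset.card_sdiff_add_card_inter J K
          rw [Finset.inter_comm J K] at h2
          omega
        have hJne : J.Nonempty := hJK.mono (Finset.sdiff_subset)
        set c : ℝ := J.inf' hJne v with hc
        have hcpos : 0 < c := by
          rw [hc, Finset.lt_inf'_iff]
          exact hJpos
        have h1 : ∑ i ∈ K \ J, v i ^ 2 ≤ (K \ J).card • c ^ 2 := by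
          apply Finset.sum_le_card_nsmul
          intro i hi
          have hiK := (Finset.mem_sdiff.mp hi).1
          have hiJ := (Finset.mem_sdiff.mp hi).2
          have hvi : 0 < v i := by
            have := hKP hiK
            simpa [hP] using this
          have hvc : v i ≤ c := by
            rw [hc, Finset.le_inf'_iff]
            intro j hj
            exact hJtop j hj i hiJ
          exact pow_le_pow_left₀ (le_of_lt hvi) hvc 2
        have h2 : (J \ K).card • c ^ 2 ≤ ∑ i ∈ J \ K, v i ^ 2 := by
          apply Finset.card_nsmul_le_sum
          intro i hi
          have hiJ := (Finset.mem_sdiff.mp hi).1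
          have hci : c ≤ v i := Finset.inf'_le _ hiJ
          exact pow_le_pow_left₀ (le_of_lt hcpos) hci 2
        have hcard : (K \ J).card ≤ (J \ K).card := by
          have h1 := Finset.card_sdiff_add_card_inter K J
          have h2 := Finset.card_sdiff_add_card_inter J K
          rw [Finset.inter_comm J K] at h2
          omega
        have h3 : (K \ J).card • c ^ 2 ≤ (J \ K).card • c ^ 2 := by
          apply nsmul_le_nsmul_left (le_of_lt (pow_pos hcpos 2)) hcard
        have e1 : ∑ i ∈ K ∩ J, v i ^ 2 + ∑ i ∈ K \ J, v i ^ 2 = ∑ i ∈ K, v i ^ 2 :=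
          Finset.sum_inter_add_sum_sdiff K J _
        have e2 : ∑ i ∈ J ∩ K, v i ^ 2 + ∑ i ∈ J \ K, v i ^ 2 = ∑ i ∈ J, v i ^ 2 :=
          Finset.sum_inter_add_sum_sdiff J K _
        rw [Finset.inter_comm J K] at e2
        linarith [le_trans h1 (le_trans h3 h2)]
    -- the value at h
    have hH : ∑ i, (h i - v i) ^ 2 = ∑ i ∈ Jᶜ, v i ^ 2 := by
      rw [← Finset.sum_add_sum_compl J fun i => (h i - v i) ^ 2]
      have e1 : ∑ i ∈ J, (h i - v i) ^ 2 = 0 := by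
        apply Finset.sum_eq_zero
        intro i hi
        rw [hh, if_pos hi]
        ring
      have e2 : ∑ i ∈ Jᶜ, (h i - v i) ^ 2 = ∑ i ∈ Jᶜ, v i ^ 2 := by
        apply Finset.sum_congr rfl
        intro i hi
        rw [hh, if_neg (Finset.mem_compl.mp hi)]
        ring
      rw [e1, e2, zero_add]
    -- the lower bound for u
    have hU : ∑ i ∈ Kᶜ, v i ^ 2 ≤ ∑ i, (u i - v i) ^ 2 := by
      rw [← Finset.sum_add_sum_compl K fun i => (u i - v i) ^ 2]
      have h1 : ∑ i ∈ Kᶜ, v i ^ 2 ≤ ∑ i ∈ Kᶜ, (u i - v i) ^ 2 := by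
        apply Finset.sum_le_sum
        intro i hi
        have hiK : i ∉ K := Finset.mem_compl.mp hi
        have : u i = 0 ∨ ¬ 0 < v i := by
          by_contra hcon
          push_neg at hcon
          exact hiK (by simp [hK, hP, hcon.1, hcon.2])
        have hui : 0 ≤ u i := hu0 i
        rcases this with h | h
        · rw [h]; ring_nf; exact le_refl _
        · push_neg at h
          nlinarith
      have h2 : 0 ≤ ∑ i ∈ K, (u i - v i) ^ 2 :=
        Finset.sum_nonneg fun i _ => sq_nonneg _
      linarith
    rw [hH]
    have etot1 : ∑ i ∈ J, v i ^ 2 + ∑ i ∈ Jᶜ, v i ^ 2 = ∑ i, v i ^ 2 :=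
      Finset.sum_add_sum_compl J _
    have etot2 : ∑ i ∈ K, v i ^ 2 + ∑ i ∈ Kᶜ, v i ^ 2 = ∑ i, v i ^ 2 :=
      Finset.sum_add_sum_compl K _
    linarith
end

section
/- Let f(v) = ½ vᵀQ_ε v − pᵀv with Q_ε symmetric positive definite, Ω = {v ≥ 0 : ‖v‖₀ ≤ m}, and 0 < α ≤ 1/‖Q_ε‖₂. If v* is a global minimizer of f over Ω, then v* is a fixed point of the projected gradient map: v* minimizes u ↦ ½‖u − (v* − α∇f(v*))‖₂² over Ω. -/
open Matrix Finset

open scoped RealInnerProductSpace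

/-! A global minimizer `x` of `f` over `Ω` satisfies `0 ≤ f u - f x ≤ ⟪∇f x, u - x⟫ + L/2 ‖u - x‖²`
for the quadratic `f`, with `L = ‖Q‖`. Expanding
`‖u - (x - α ∇f x)‖² = ‖u - x‖² + 2α⟪∇f x, u - x⟫ + ‖α ∇f x‖²`, the middle term is at least
`-αL ‖u - x‖² ≥ -‖u - x‖²` because `αL ≤ 1`, so the distance to the gradient step is smallest at
`u = x`. -/

section

variable {E : Type*} [NormedAddCommGroup E] [InnerProductSpace ℝ E]

theorem IsMinOn.isMinOn_norm_sub_gradient_step_sq {f : E → ℝ} {s : Set E} {x g : E} {L α : ℝ}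
    (hmin : IsMinOn f s x)
    (hupper : ∀ u ∈ s, f u ≤ f x + ⟪g, u - x⟫ + L / 2 * ‖u - x‖ ^ 2)
    (hα : 0 ≤ α) (hαL : α * L ≤ 1) :
    IsMinOn (fun u => ‖u - (x - α • g)‖ ^ 2) s x := by
  intro u hu
  have hdescent : 0 ≤ ⟪g, u - x⟫ + L / 2 * ‖u - x‖ ^ 2 := by
    linarith [isMinOn_iff.mp hmin u hu, hupper u hu]
  have hexpand : ‖u - (x - α • g)‖ ^ 2 = ‖u - x‖ ^ 2 + 2 * α * ⟪g, u - x⟫ + ‖α • g‖ ^ 2 := by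
    rw [sub_sub_eq_add_sub, add_sub_right_comm, norm_add_sq_real, real_inner_smul_right,
      real_inner_comm]
    ring
  simp only [Set.mem_ofPred_eq, sub_sub_cancel, hexpand]
  nlinarith [mul_le_mul_of_nonneg_right hαL (sq_nonneg ‖u - x‖),
    mul_nonneg hα hdescent]

theorem LinearMap.IsSymmetric.inner_map_add_self {T : E →L[ℝ] E}
    (hT : (T : E →ₗ[ℝ] E).IsSymmetric) (x d : E) :
    ⟪x + d, T (x + d)⟫ = ⟪x, T x⟫ + 2 * ⟪T x, d⟫ + ⟪d, T d⟫ := by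
  have : ⟪x, T d⟫ = ⟪T x, d⟫ := (hT x d).symm
  simp only [map_add, inner_add_left, inner_add_right, this, real_inner_comm d (T x)]
  ring

theorem LinearMap.IsSymmetric.quadratic_le_linearization_add_opNorm {T : E →L[ℝ] E}
    (hT : (T : E →ₗ[ℝ] E).IsSymmetric) (p x u : E) :
    1 / 2 * ⟪u, T u⟫ - ⟪p, u⟫ ≤
      1 / 2 * ⟪x, T x⟫ - ⟪p, x⟫ + ⟪T x - p, u - x⟫ + ‖T‖ / 2 * ‖u - x‖ ^ 2 := by
  obtain ⟨d, rfl⟩ : ∃ d, u = x + d := ⟨u - x, by abel⟩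
  have hquad : ⟪d, T d⟫ ≤ ‖T‖ * ‖d‖ ^ 2 :=
    calc ⟪d, T d⟫ ≤ ‖d‖ * ‖T d‖ := real_inner_le_norm _ _
      _ ≤ ‖d‖ * (‖T‖ * ‖d‖) := by gcongr; exact T.le_opNorm d
      _ = ‖T‖ * ‖d‖ ^ 2 := by ring
  rw [hT.inner_map_add_self, add_sub_cancel_left, inner_sub_left, inner_add_right]
  linarith

end

theorem stmt_6_general (N : ℕ) (Q : Matrix (Fin N) (Fin N) ℝ) (hQ : Q.PosDef)
    (p : Fin N → ℝ)
    (Ω : Set (Fin N → ℝ))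
    (α : ℝ) (hα : 0 < α) (hα' : α ≤ 1 / ‖Matrix.toEuclideanCLM (𝕜 := ℝ) Q‖)
    (vs : Fin N → ℝ)
    (hmin : ∀ v ∈ Ω,
      (1/2) * (vs ⬝ᵥ Q.mulVec vs) - p ⬝ᵥ vs ≤ (1/2) * (v ⬝ᵥ Q.mulVec v) - p ⬝ᵥ v) :
    ∀ u ∈ Ω,
      (1/2) * ∑ i, (vs i - (vs i - α * (Q.mulVec vs - p) i))^2 ≤
      (1/2) * ∑ i, (u i - (vs i - α * (Q.mulVec vs - p) i))^2 := by
  set T := Matrix.toEuclideanCLM (𝕜 := ℝ) Q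
  have hT : (T : EuclideanSpace ℝ (Fin N) →ₗ[ℝ] _).IsSymmetric :=
    isSymmetric_toEuclideanLin_iff.mpr hQ.isHermitian
  have hαT : α * ‖T‖ ≤ 1 := mul_le_of_le_div₀ zero_le_one (norm_nonneg T) hα'
  have hmin' : IsMinOn (fun u => 1 / 2 * ⟪u, T u⟫ - ⟪WithLp.toLp 2 p, u⟫)
      (WithLp.ofLp ⁻¹' Ω) (WithLp.toLp 2 vs) := by
    intro v hv
    simpa [T, inner_toEuclideanCLM, EuclideanSpace.inner_eq_star_dotProduct, dotProduct_comm]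
      using hmin _ hv
  intro u hu
  have hstep := isMinOn_iff.mp (hmin'.isMinOn_norm_sub_gradient_step_sq
    (fun u _ => hT.quadratic_le_linearization_add_opNorm _ _ u) hα.le hαT) (WithLp.toLp 2 u) hu
  simp only [EuclideanSpace.real_norm_sq_eq] at hstep
  simpa [T] using hstep

theorem stmt_6 (N m : ℕ) (Q : Matrix (Fin N) (Fin N) ℝ) (hQ : Q.PosDef)
    (p : Fin N → ℝ)
    (Ω : Set (Fin N → ℝ))
    (hΩ : Ω = {v | (∀ i, 0 ≤ v i) ∧ (Finset.univ.filter fun i => v i ≠ 0).card ≤ m})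
    (α : ℝ) (hα : 0 < α) (hα' : α ≤ 1 / ‖Matrix.toEuclideanCLM (𝕜 := ℝ) Q‖)
    (vs : Fin N → ℝ) (hvs : vs ∈ Ω)
    (hmin : ∀ v ∈ Ω,
      (1/2) * (vs ⬝ᵥ Q.mulVec vs) - p ⬝ᵥ vs ≤ (1/2) * (v ⬝ᵥ Q.mulVec v) - p ⬝ᵥ v) :
    ∀ u ∈ Ω,
      (1/2) * ∑ i, (vs i - (vs i - α * (Q.mulVec vs - p) i))^2 ≤
      (1/2) * ∑ i, (u i - (vs i - α * (Q.mulVec vs - p) i))^2 :=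
  stmt_6_general N Q hQ p Ω α hα hα' vs hmin
end

section
/- Let f(v) = ½ vᵀQ_ε v − pᵀv with Q_ε = QᵀQ + εI, ε > 0, Ω = {v ≥ 0 : ‖v‖₀ ≤ m}, and α ≥ 1/ε. If v* ∈ Ω satisfies ⟨∇f(v*), u − v*⟩ + (1/(2α))‖u − v*‖₂² ≥ 0 for all u ∈ Ω, then v* is a global minimizer of f over Ω. -/
open Matrix Finset

theorem stmt_7 (T N m : ℕ) (Q : Matrix (Fin T) (Fin N) ℝ) (ε : ℝ) (hε : 0 < ε)
    (p : Fin N → ℝ)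
    (Qε : Matrix (Fin N) (Fin N) ℝ)
    (hQε : Qε = Qᵀ * Q + ε • (1 : Matrix (Fin N) (Fin N) ℝ))
    (Ω : Set (Fin N → ℝ))
    (hΩ : Ω = {v | (∀ i, 0 ≤ v i) ∧ (Finset.univ.filter fun i => v i ≠ 0).card ≤ m})
    (α : ℝ) (hα : 1 / ε ≤ α)
    (vs : Fin N → ℝ) (hvs : vs ∈ Ω)
    (hVI : ∀ u ∈ Ω,
      0 ≤ (∑ i, (Qε.mulVec vs - p) i * (u i - vs i)) + (1 / (2 * α)) * ∑ i, (u i - vs i)^2) :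
    ∀ u ∈ Ω,
      (1/2) * (vs ⬝ᵥ Qε.mulVec vs) - p ⬝ᵥ vs ≤ (1/2) * (u ⬝ᵥ Qε.mulVec u) - p ⬝ᵥ u := by
  intro u hu
  have hα0 : 0 < α := lt_of_lt_of_le (by positivity) hα
  have hinv : 1 / α ≤ ε := by
    rw [div_le_iff₀ hα0]
    have h1 : ε * (1/ε) ≤ ε * α := mul_le_mul_of_nonneg_left hα hε.le
    rw [mul_one_div, div_self hε.ne'] at h1
    linarith
  set w : Fin N → ℝ := u - vs with hw
  -- symmetry
  have hsymm : ∀ a b : Fin N → ℝ, a ⬝ᵥ Qε.mulVec b = b ⬝ᵥ Qε.mulVec a := by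
    intro a b
    have hT : Qεᵀ = Qε := by
      rw [hQε]; simp [Matrix.transpose_add, Matrix.transpose_mul, Matrix.transpose_smul]
    rw [Matrix.dotProduct_mulVec, ← Matrix.vecMul_transpose, hT, dotProduct_comm]
  -- positivity of quadratic form
  have hpos : ε * (∑ i, w i ^ 2) ≤ w ⬝ᵥ Qε.mulVec w := by
    have h1 : w ⬝ᵥ Qε.mulVec w
        = (Q.mulVec w) ⬝ᵥ (Q.mulVec w) + ε * (w ⬝ᵥ w) := by
      rw [hQε, Matrix.add_mulVec, dotProduct_add, ← Matrix.mulVec_mulVec,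
        Matrix.dotProduct_mulVec (v := w) (A := Qᵀ), Matrix.vecMul_transpose,
        Matrix.smul_mulVec, Matrix.one_mulVec, dotProduct_smul]
      simp [smul_eq_mul]
    have h2 : w ⬝ᵥ w = ∑ i, w i ^ 2 := by
      simp [dotProduct, pow_two]
    have h3 : 0 ≤ (Q.mulVec w) ⬝ᵥ (Q.mulVec w) := Finset.sum_nonneg fun i _ => mul_self_nonneg _
    linarith [h1, h3, h2 ▸ h1]
  -- expansion identity
  have hlin : Qε.mulVec u = Qε.mulVec vs + Qε.mulVec w := by
    rw [hw]; rw [← Matrix.mulVec_add]; congr 1; funext i; simp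
  have hexp : ((1/2) * (u ⬝ᵥ Qε.mulVec u) - p ⬝ᵥ u)
      - ((1/2) * (vs ⬝ᵥ Qε.mulVec vs) - p ⬝ᵥ vs)
      = (∑ i, (Qε.mulVec vs - p) i * (u i - vs i)) + (1/2) * (w ⬝ᵥ Qε.mulVec w) := by
    have hu' : u = vs + w := by funext i; simp [hw]
    have e1 : u ⬝ᵥ Qε.mulVec u = vs ⬝ᵥ Qε.mulVec vs + 2 * (vs ⬝ᵥ Qε.mulVec w)
        + w ⬝ᵥ Qε.mulVec w := by
      rw [hu', Matrix.mulVec_add, add_dotProduct, dotProduct_add,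
        dotProduct_add]
      have := hsymm w vs
      linarith
    have e2 : (∑ i, (Qε.mulVec vs - p) i * (u i - vs i))
        = vs ⬝ᵥ Qε.mulVec w - p ⬝ᵥ w := by
      have : ∀ i, (Qε.mulVec vs - p) i * (u i - vs i)
          = (Qε.mulVec vs) i * w i - p i * w i := by
        intro i; simp [hw]; ring
      rw [Finset.sum_congr rfl (fun i _ => this i), Finset.sum_sub_distrib]
      congr 1
      rw [hsymm vs w]; simp [dotProduct, mul_comm]
    have e3 : p ⬝ᵥ u = p ⬝ᵥ vs + p ⬝ᵥ w := by
      rw [hu', dotProduct_add]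
    rw [e1, e2, e3]; ring
  have hVIu := hVI u hu
  have hsum : (0:ℝ) ≤ ∑ i, w i ^ 2 := Finset.sum_nonneg (fun i _ => sq_nonneg _)
  have hhalf : (1 / (2 * α)) * ∑ i, (u i - vs i)^2 ≤ (1/2) * (w ⬝ᵥ Qε.mulVec w) := by
    have hw2 : ∀ i, (u i - vs i)^2 = w i ^ 2 := by intro i; simp [hw]
    simp only [hw2]
    have : (1 / (2 * α)) * ∑ i, w i ^ 2 ≤ (1/2) * (ε * ∑ i, w i ^ 2) := by
      have : 1 / (2 * α) = (1/2) * (1/α) := by field_simp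
      rw [this]
      nlinarith [mul_le_mul_of_nonneg_right hinv hsum]
    linarith [mul_le_mul_of_nonneg_left hpos (by norm_num : (0:ℝ) ≤ 1/2)]
  linarith [hexp, hVIu, hhalf]
end

section
/- Let Ω = {v ≥ 0 : ‖v‖₀ ≤ m} and let P denote the hard-thresholding projection (keep the m largest positive components, or all positive components if at most m, zero the rest). If x^{(k)} → x* with x* ∈ Ω, then P(x^{(k)}) → P(x*) = x*. That is, P is continuous at every point of Ω. -/
open Finset Filter

theorem stmt_15 (N m : ℕ)
    (x : ℕ → EuclideanSpace ℝ (Fin N)) (h : ℕ → EuclideanSpace ℝ (Fin N))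
    (xs : EuclideanSpace ℝ (Fin N))
    (hxs : (∀ i, 0 ≤ xs i) ∧ (Finset.univ.filter fun i => xs i ≠ 0).card ≤ m)
    (hconv : Tendsto x atTop (nhds xs))
    (hproj : ∀ k, ∃ J : Finset (Fin N),
      (∀ i ∈ J, 0 < x k i) ∧
      (∀ i ∈ J, ∀ j ∉ J, x k j ≤ x k i) ∧
      J.card = min m (Finset.univ.filter fun i => 0 < x k i).card ∧
      ∀ i, h k i = if i ∈ J then x k i else 0) :
    Tendsto h atTop (nhds xs) := by
  classical
  set S : Finset (Fin N) := Finset.univ.filter fun i => xs i ≠ 0 with hSdef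
  obtain ⟨hxs0, hcard⟩ := hxs
  -- coordinatewise distance bound
  have coord : ∀ (a b : EuclideanSpace ℝ (Fin N)) (i : Fin N),
      dist (a i) (b i) ≤ dist a b := by
    intro a b i
    rw [EuclideanSpace.dist_eq]
    have h1 : dist (a i) (b i) = Real.sqrt (dist (a i) (b i) ^ 2) := by
      rw [Real.sqrt_sq dist_nonneg]
    rw [h1]
    apply Real.sqrt_le_sqrt
    exact Finset.single_le_sum (f := fun j => dist (a j) (b j) ^ 2)
      (fun j _ => sq_nonneg _) (Finset.mem_univ i)
  -- main coordinatewise bound, eventually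
  have key : ∀ᶠ k in atTop, ∀ i, dist (h k i) (xs i) ≤ dist (x k i) (xs i) := by
    rcases S.eq_empty_or_nonempty with hSe | hSne
    · -- xs = 0
      have hxs_zero : ∀ i, xs i = 0 := by
        intro i
        by_contra hi
        have : i ∈ S := by simp [hSdef, hi]
        simp [hSe] at this
      filter_upwards with k i
      obtain ⟨J, hJpos, hJmax, hJcard, hJval⟩ := hproj k
      rw [hJval i, hxs_zero i]
      by_cases hiJ : i ∈ J <;> simp [hiJ]
    · -- S nonempty
      set c : ℝ := S.inf' hSne (fun i => xs i) with hcdef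
      have hc_pos : 0 < c := by
        rw [hcdef, Finset.lt_inf'_iff]
        intro i hi
        have hne : xs i ≠ 0 := by
          simp only [hSdef, Finset.mem_filter] at hi
          exact hi.2
        exact lt_of_le_of_ne (hxs0 i) (Ne.symm hne)
      have hev : ∀ᶠ k in atTop, dist (x k) xs < c / 2 :=
        hconv (Metric.ball_mem_nhds xs (by linarith))
      filter_upwards [hev] with k hk i
      obtain ⟨J, hJpos, hJmax, hJcard, hJval⟩ := hproj k
      have hcoordk : ∀ j, dist (x k j) (xs j) < c / 2 :=
        fun j => lt_of_le_of_lt (coord _ _ j) hk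
      -- S ⊆ J
      have hSsubJ : S ⊆ J := by
        intro i hi
        have hxsi : c ≤ xs i := Finset.inf'_le _ hi
        have hxki : c / 2 < x k i := by
          have := hcoordk i
          rw [Real.dist_eq, abs_lt] at this
          linarith
        by_contra hiJ
        set P : Finset (Fin N) := Finset.univ.filter fun j => 0 < x k j with hPdef
        have hiP : i ∈ P := by simp [hPdef]; linarith
        have hJP : J ⊆ P := fun j hj => by simp [hPdef, hJpos j hj]
        rcases le_or_gt P.card m with hle | hlt
        · have : J = P := Finset.eq_of_subset_of_card_le hJP
            (by rw [hJcard]; omega)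
          exact hiJ (this ▸ hiP)
        · have hJm : J.card = m := by rw [hJcard]; omega
          -- exists j ∈ J \ S
          have : ¬ J ⊆ S := by
            intro hsub
            have hJsub : J ⊆ S.erase i :=
              fun j hj => Finset.mem_erase.mpr ⟨fun he => hiJ (he ▸ hj), hsub hj⟩
            have := Finset.card_le_card hJsub
            rw [Finset.card_erase_of_mem hi, hJm] at this
            have hS1 : 1 ≤ S.card := Finset.card_pos.mpr ⟨i, hi⟩
            omega
          obtain ⟨j, hjJ, hjS⟩ := Finset.not_subset.mp this
          have hxsj : xs j = 0 := by
            by_contra hne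
            exact hjS (by simp [hSdef, hne])
          have h1 : x k i ≤ x k j := hJmax j hjJ i hiJ
          have h2 := hcoordk j
          rw [Real.dist_eq, hxsj, sub_zero, abs_lt] at h2
          linarith
      rw [hJval i]
      by_cases hiJ : i ∈ J
      · simp [hiJ]
      · have hiS : i ∉ S := fun hi => hiJ (hSsubJ hi)
        have hxsi : xs i = 0 := by
          by_contra hne
          exact hiS (by simp [hSdef, hne])
        simp [hiJ, hxsi]
  -- conclude via squeeze
  rw [tendsto_iff_dist_tendsto_zero]
  have hdist : ∀ᶠ k in atTop, dist (h k) xs ≤ dist (x k) xs := by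
    filter_upwards [key] with k hk
    rw [EuclideanSpace.dist_eq, EuclideanSpace.dist_eq]
    apply Real.sqrt_le_sqrt
    apply Finset.sum_le_sum
    intro i _
    have := hk i
    have h0 : (0 : ℝ) ≤ dist (h k i) (xs i) := dist_nonneg
    nlinarith
  have hx0 : Tendsto (fun k => dist (x k) xs) atTop (nhds 0) :=
    tendsto_iff_dist_tendsto_zero.mp hconv
  exact squeeze_zero' (Eventually.of_forall fun k => dist_nonneg) hdist hx0
end

section
/- Let ψ: ℝ^N → ℝ be differentiable with L-Lipschitz gradient and also μ-strongly convex, and let α ∈ (0, 1/L). Suppose a sequence {v^{(k)}} in a set Ω converges to v* ∈ Ω, satisfies the sufficient-decrease inequality ψ(v^{(k+1)}) + ½(1/α − L)‖v^{(k+1)} − v^{(k)}‖² ≤ ψ(v^{(k)}), and for all k large, ⟨∇ψ(v*), v^{(k)} − v*⟩ ≥ 0 and ψ(v^{(k+1)}) − ψ(v*) ≤ (1/(2α))(‖v^{(k)} − v*‖² − ‖v^{(k+1)} − v*‖²). Then ψ(v^{(k)}) − ψ(v*) = O(1/k) and ‖v^{(k)} − v*‖₂ = O(1/√k). -/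
open Filter
open scoped RealInnerProductSpace

/-!
Sufficient decrease makes `ψ (v k)` antitone, and strong convexity together with
`⟪∇ψ v*, v k - v*⟫ ≥ 0` gives `ψ (v k) - ψ v* ≥ μ/2 ‖v k - v*‖² ≥ 0`. Summing the telescoping
bound over `k = K, …, K + n - 1` and using monotonicity yields `n (ψ (v (K+n)) - ψ v*) ≤
‖v K - v*‖² / (2α)`, the `O(1/k)` rate; the quadratic growth turns it into `‖v k - v*‖² = O(1/k)`.
-/

theorem ConvexOn.le_sub_of_hasFDerivAt {E : Type*} [NormedAddCommGroup E] [NormedSpace ℝ E]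
    {s : Set E} {f : E → ℝ} {f' : E →L[ℝ] ℝ} {x y : E} (hf : ConvexOn ℝ s f)
    (hx : x ∈ s) (hy : y ∈ s) (hd : HasFDerivAt f f' x) :
    f' (y - x) ≤ f y - f x := by
  have hseg : Set.Icc (0 : ℝ) 1 ⊆ AffineMap.lineMap (k := ℝ) x y ⁻¹' s :=
    fun t ht => hf.1.lineMap_mem hx hy ⟨ht.1, ht.2⟩
  have hline := (hf.comp_affineMap (AffineMap.lineMap (k := ℝ) x y)).subset hseg (convex_Icc 0 1)
  have hderiv : HasDerivAt (f ∘ AffineMap.lineMap (k := ℝ) x y) (f' (y - x)) 0 := by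
    refine HasFDerivAt.comp_hasDerivAt (0 : ℝ) ?_ AffineMap.hasDerivAt_lineMap
    simpa using hd
  simpa [slope_def_field] using
    hline.le_slope_of_hasDerivAt (by simp) (by simp) zero_lt_one hderiv

theorem le_sub_of_convexOn_sub_norm_sq {F : Type*} [NormedAddCommGroup F] [InnerProductSpace ℝ F]
    [CompleteSpace F] {s : Set F} {ψ : F → ℝ} {μ : ℝ} {g x y : F}
    (hsc : ConvexOn ℝ s (fun v => ψ v - (μ / 2) * ‖v‖ ^ 2)) (hx : x ∈ s) (hy : y ∈ s)
    (hgrad : HasGradientAt ψ g x) :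
    ⟪g, y - x⟫ + μ / 2 * ‖y - x‖ ^ 2 ≤ ψ y - ψ x := by
  have hd := (hasGradientAt_iff_hasFDerivAt.mp hgrad).sub
    ((hasStrictFDerivAt_norm_sq x).hasFDerivAt.const_mul (μ / 2))
  have hfirst : ⟪g, y - x⟫ - μ * ⟪x, y - x⟫ ≤ ψ y - μ / 2 * ‖y‖ ^ 2 - (ψ x - μ / 2 * ‖x‖ ^ 2) := by
    have := hsc.le_sub_of_hasFDerivAt hx hy hd
    simp only [sub_apply, InnerProductSpace.toDual_apply_apply, smul_apply, coe_innerSL_apply,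
      nsmul_eq_mul, Nat.cast_ofNat, smul_eq_mul] at this
    linarith
  rw [inner_sub_right x, real_inner_self_eq_norm_sq] at hfirst
  rw [norm_sub_sq_real, real_inner_comm x y]
  linarith

theorem mul_le_of_antitone_of_le_sub {D e : ℕ → ℝ} (hD : Antitone D) (he : ∀ k, 0 ≤ e k)
    (hstep : ∀ k, D (k + 1) ≤ e k - e (k + 1)) (n : ℕ) : n * D n ≤ e 0 :=
  calc (n : ℝ) * D n = ∑ j ∈ Finset.range n, D n := by simp
    _ ≤ ∑ j ∈ Finset.range n, (e j - e (j + 1)) :=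
        Finset.sum_le_sum fun j hj => (hD (Finset.mem_range.mp hj)).trans (hstep j)
    _ = e 0 - e n := Finset.sum_range_sub' e n
    _ ≤ e 0 := sub_le_self _ (he n)

theorem exists_forall_le_of_eventually_le {f : ℕ → ℝ} {C : ℝ} (h : ∀ᶠ k in atTop, f k ≤ C) :
    ∃ C', ∀ k, f k ≤ C' := by
  obtain ⟨C', hC'⟩ := (isBoundedUnder_of_eventually_le h).bddAbove_range
  exact ⟨C', fun k => hC' ⟨k, rfl⟩⟩

theorem exists_forall_mul_le_of_antitone_of_le_sub {D e : ℕ → ℝ} (hD : Antitone D)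
    (hD0 : ∀ k, 0 ≤ D k) (he : ∀ k, 0 ≤ e k) (K : ℕ)
    (hstep : ∀ k ≥ K, D (k + 1) ≤ e k - e (k + 1)) :
    ∃ C, ∀ k : ℕ, k * D k ≤ C := by
  refine exists_forall_le_of_eventually_le (C := 2 * e K) (eventually_atTop.mpr ⟨2 * K, ?_⟩)
  intro k hk
  -- `k = K + n` with `K ≤ n`, so `k ≤ 2 n`
  obtain ⟨n, rfl⟩ := Nat.exists_eq_add_of_le (by omega : K ≤ k)
  have htail := mul_le_of_antitone_of_le_sub (D := fun j => D (K + j)) (e := fun j => e (K + j))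
    (fun i j hij => hD (by omega)) (fun j => he _) (fun j => hstep (K + j) (by omega)) n
  have hKn : (K : ℝ) ≤ n := by exact_mod_cast (by omega : K ≤ n)
  rw [add_zero] at htail
  push_cast
  nlinarith [mul_le_mul_of_nonneg_right hKn (hD0 (K + n))]

theorem le_sqrt_div_sqrt_of_mul_sq_le {a c t : ℝ} (ha : 0 ≤ a) (ht : 0 < t) (h : t * a ^ 2 ≤ c) :
    a ≤ √c / √t := by
  have hc : 0 ≤ c := (mul_nonneg ht.le (sq_nonneg a)).trans h
  rw [← Real.sqrt_div' c ht.le, Real.le_sqrt ha (div_nonneg hc ht.le), le_div_iff₀ ht]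
  linarith

theorem stmt_16_general (N : ℕ) (ψ : EuclideanSpace ℝ (Fin N) → ℝ)
    (g : EuclideanSpace ℝ (Fin N) → EuclideanSpace ℝ (Fin N))
    (L μ α : ℝ) (hL : 0 < L) (hμ : 0 < μ)
    (hgrad : ∀ v, HasGradientAt ψ (g v) v)
    (hsc : ConvexOn ℝ Set.univ (fun v => ψ v - (μ/2) * ‖v‖^2))
    (hα : 0 < α) (hα' : α < 1 / L)
    (v : ℕ → EuclideanSpace ℝ (Fin N))
    (vs : EuclideanSpace ℝ (Fin N))
    (hdecr : ∀ k, ψ (v (k+1)) + (1/2) * (1/α - L) * ‖v (k+1) - v k‖^2 ≤ ψ (v k))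
    (hlarge : ∃ K : ℕ, ∀ k ≥ K,
      0 ≤ ⟪g vs, v k - vs⟫ ∧
      ψ (v (k+1)) - ψ vs ≤ (1 / (2*α)) * (‖v k - vs‖^2 - ‖v (k+1) - vs‖^2)) :
    (∃ C : ℝ, ∀ k : ℕ, 1 ≤ k → |ψ (v k) - ψ vs| ≤ C / k) ∧
    (∃ C : ℝ, ∀ k : ℕ, 1 ≤ k → ‖v k - vs‖ ≤ C / Real.sqrt k) := by
  obtain ⟨K, hK⟩ := hlarge
  have hanti : Antitone (fun k => ψ (v k)) := by
    have hLα : L ≤ 1 / α := by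
      rw [lt_div_iff₀ hL] at hα'
      rw [le_div_iff₀ hα]
      linarith
    refine antitone_nat_of_succ_le fun k => ?_
    nlinarith [hdecr k, sq_nonneg ‖v (k + 1) - v k‖]
  have hdist_le : ∀ k ≥ K, μ / 2 * ‖v k - vs‖ ^ 2 ≤ ψ (v k) - ψ vs := fun k hk => by
    linarith [le_sub_of_convexOn_sub_norm_sq hsc trivial trivial (y := v k) (hgrad vs), (hK k hk).1]
  have hgap : ∀ k, 0 ≤ ψ (v k) - ψ vs := fun k =>
    calc 0 ≤ μ / 2 * ‖v (max k K) - vs‖ ^ 2 := by positivity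
      _ ≤ ψ (v (max k K)) - ψ vs := hdist_le _ (le_max_right k K)
      _ ≤ ψ (v k) - ψ vs := by linarith [hanti (le_max_left k K)]
  obtain ⟨C, hC⟩ := exists_forall_mul_le_of_antitone_of_le_sub
    (D := fun k => ψ (v k) - ψ vs) (e := fun k => 1 / (2 * α) * ‖v k - vs‖ ^ 2)
    (fun i j hij => sub_le_sub_right (hanti hij) _) hgap (fun k => by positivity) K
    (fun k hk => by simpa only [mul_sub] using (hK k hk).2)
  obtain ⟨C', hC'⟩ : ∃ C', ∀ k : ℕ, k * ‖v k - vs‖ ^ 2 ≤ C' := by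
    refine exists_forall_le_of_eventually_le (C := 2 * C / μ)
      (eventually_atTop.mpr ⟨K, fun k hk => ?_⟩)
    rw [le_div_iff₀ hμ]
    nlinarith [mul_le_mul_of_nonneg_left (hdist_le k hk) (Nat.cast_nonneg k), hC k]
  refine ⟨⟨C, fun k hk => ?_⟩, ⟨√C', fun k hk => ?_⟩⟩
  · rw [abs_of_nonneg (hgap k), le_div_iff₀ (by positivity)]
    linarith [hC k]
  · exact le_sqrt_div_sqrt_of_mul_sq_le (norm_nonneg _) (by exact_mod_cast hk) (hC' k)

theorem stmt_16 (N : ℕ) (ψ : EuclideanSpace ℝ (Fin N) → ℝ)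
    (g : EuclideanSpace ℝ (Fin N) → EuclideanSpace ℝ (Fin N))
    (L μ α : ℝ) (hL : 0 < L) (hμ : 0 < μ)
    (hgrad : ∀ v, HasGradientAt ψ (g v) v)
    (hLip : LipschitzWith (Real.toNNReal L) g)
    (hsc : ConvexOn ℝ Set.univ (fun v => ψ v - (μ/2) * ‖v‖^2))
    (hα : 0 < α) (hα' : α < 1 / L)
    (Ω : Set (EuclideanSpace ℝ (Fin N)))
    (v : ℕ → EuclideanSpace ℝ (Fin N)) (hvΩ : ∀ k, v k ∈ Ω)
    (vs : EuclideanSpace ℝ (Fin N)) (hvsΩ : vs ∈ Ω)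
    (hconv : Tendsto v atTop (nhds vs))
    (hdecr : ∀ k, ψ (v (k+1)) + (1/2) * (1/α - L) * ‖v (k+1) - v k‖^2 ≤ ψ (v k))
    (hlarge : ∃ K : ℕ, ∀ k ≥ K,
      0 ≤ ⟪g vs, v k - vs⟫ ∧
      ψ (v (k+1)) - ψ vs ≤ (1 / (2*α)) * (‖v k - vs‖^2 - ‖v (k+1) - vs‖^2)) :
    (∃ C : ℝ, ∀ k : ℕ, 1 ≤ k → |ψ (v k) - ψ vs| ≤ C / k) ∧
    (∃ C : ℝ, ∀ k : ℕ, 1 ≤ k → ‖v k - vs‖ ≤ C / Real.sqrt k) :=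
  stmt_16_general N ψ g L μ α hL hμ hgrad hsc hα hα' v vs hdecr hlarge
end

section
/- Let f(v) = ½ vᵀQ_ε v − pᵀv with Q_ε = QᵀQ + εI, ε > 0, and Ω = {v ≥ 0 : ‖v‖₀ ≤ m}. Let v* ∈ Ω satisfy v* ∈ prox_{ι_Ω}(v* − α∇f(v*)) for some α ∈ (0, 1/‖Q_ε‖₂). If the support of v* has fewer than m elements, then ∇_i f(v*) = 0 for all i ∈ supp(v*) and ∇_i f(v*) ≥ 0 for all i ∉ supp(v*), and consequently v* is a global minimizer of f over Ω. -/
open Matrix Finset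

lemma coord_ineq {N : ℕ} (y vs : Fin N → ℝ) (i : Fin N) (c : ℝ)
    (h : ∑ j, (vs j - y j)^2 ≤ ∑ j, (Function.update vs i c j - y j)^2) :
    (vs i - y i)^2 ≤ (c - y i)^2 := by
  have h1 : ∑ j, (Function.update vs i c j - y j)^2
      = (c - y i)^2 + ∑ j ∈ Finset.univ.erase i, (vs j - y j)^2 := by
    rw [← Finset.add_sum_erase _ _ (Finset.mem_univ i)]
    simp only [Function.update_self]
    congr 1
    exact Finset.sum_congr rfl fun j hj => by
      rw [Function.update_of_ne (Finset.ne_of_mem_erase hj)]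
  have h2 : ∑ j, (vs j - y j)^2
      = (vs i - y i)^2 + ∑ j ∈ Finset.univ.erase i, (vs j - y j)^2 :=
    (Finset.add_sum_erase _ _ (Finset.mem_univ i)).symm
  rw [h1, h2] at h
  linarith

theorem stmt_18 (T N m : ℕ) (Q : Matrix (Fin T) (Fin N) ℝ) (ε : ℝ) (hε : 0 < ε)
    (p : Fin N → ℝ)
    (Qε : Matrix (Fin N) (Fin N) ℝ)
    (hQε : Qε = Qᵀ * Q + ε • (1 : Matrix (Fin N) (Fin N) ℝ))
    (Ω : Set (Fin N → ℝ))
    (hΩ : Ω = {v | (∀ i, 0 ≤ v i) ∧ (Finset.univ.filter fun i => v i ≠ 0).card ≤ m})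
    (α : ℝ) (hα : 0 < α) (hα' : α < 1 / ‖Matrix.toEuclideanCLM (𝕜 := ℝ) Qε‖)
    (vs : Fin N → ℝ) (hvs : vs ∈ Ω)
    (hfix : ∀ u ∈ Ω,
      ∑ i, (vs i - (vs i - α * (Qε.mulVec vs - p) i))^2 ≤
      ∑ i, (u i - (vs i - α * (Qε.mulVec vs - p) i))^2)
    (hsupp : (Finset.univ.filter fun i => vs i ≠ 0).card < m) :
    (∀ i, vs i ≠ 0 → (Qε.mulVec vs - p) i = 0) ∧
    (∀ i, vs i = 0 → 0 ≤ (Qε.mulVec vs - p) i) ∧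
    ∀ u ∈ Ω,
      (1/2) * (vs ⬝ᵥ Qε.mulVec vs) - p ⬝ᵥ vs ≤ (1/2) * (u ⬝ᵥ Qε.mulVec u) - p ⬝ᵥ u := by
  rw [hΩ] at hvs
  obtain ⟨hnn, hcard⟩ := hvs
  set g : Fin N → ℝ := Qε.mulVec vs - p with hg
  -- any single-coordinate nonnegative update stays in Ω
  have hupd : ∀ (i : Fin N) (c : ℝ), 0 ≤ c → Function.update vs i c ∈ Ω := by
    intro i c hc
    rw [hΩ]
    constructor
    · intro j
      rcases eq_or_ne j i with rfl | hji
      · simpa using hc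
      · rw [Function.update_of_ne hji]; exact hnn j
    · have hsub : (Finset.univ.filter fun j => Function.update vs i c j ≠ 0)
          ⊆ insert i (Finset.univ.filter fun j => vs j ≠ 0) := by
        intro j hj
        simp only [Finset.mem_filter, Finset.mem_univ, true_and] at hj
        rcases eq_or_ne j i with rfl | hji
        · exact Finset.mem_insert_self _ _
        · rw [Function.update_of_ne hji] at hj
          exact Finset.mem_insert_of_mem (by simp [hj])
      calc (Finset.univ.filter fun j => Function.update vs i c j ≠ 0).card
          ≤ (insert i (Finset.univ.filter fun j => vs j ≠ 0)).card := Finset.card_le_card hsub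
        _ ≤ (Finset.univ.filter fun j => vs j ≠ 0).card + 1 := Finset.card_insert_le _ _
        _ ≤ m := hsupp
  have hkey : ∀ (i : Fin N) (c : ℝ), 0 ≤ c → (α * g i)^2 ≤ (c - vs i + α * g i)^2 := by
    intro i c hc
    have := coord_ineq (fun j => vs j - α * g j) vs i c (hfix _ (hupd i c hc))
    have h1 : vs i - (vs i - α * g i) = α * g i := by ring
    have h2 : c - (vs i - α * g i) = c - vs i + α * g i := by ring
    rw [h1, h2] at this
    exact this
  have hact : ∀ i, vs i ≠ 0 → g i = 0 := by
    intro i hi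
    have hpos : 0 < vs i := lt_of_le_of_ne (hnn i) (Ne.symm hi)
    rcases le_or_gt 0 (vs i - α * g i) with hy | hy
    · have := hkey i (vs i - α * g i) hy
      have h0 : (α * g i)^2 ≤ 0 := by nlinarith
      have : α * g i = 0 := by nlinarith [sq_nonneg (α * g i)]
      have := mul_eq_zero.mp this
      rcases this with h | h
      · exact absurd h (ne_of_gt hα)
      · exact h
    · exfalso
      have := hkey i 0 le_rfl
      nlinarith
  have hinact : ∀ i, vs i = 0 → 0 ≤ g i := by
    intro i hi
    by_contra hneg
    push_neg at hneg
    have hcpos : 0 ≤ -(α * g i) := by nlinarith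
    have := hkey i (-(α * g i)) hcpos
    rw [hi] at this
    have hlt : α * g i < 0 := mul_neg_of_pos_of_neg hα hneg
    nlinarith
  refine ⟨hact, hinact, ?_⟩
  intro u hu
  rw [hΩ] at hu
  obtain ⟨hunn, _⟩ := hu
  -- g ⬝ (u - vs) ≥ 0
  have hlin : 0 ≤ ∑ i, g i * (u i - vs i) := by
    apply Finset.sum_nonneg
    intro i _
    rcases eq_or_ne (vs i) 0 with h0 | h0
    · have := hinact i h0
      have := hunn i
      nlinarith
    · rw [hact i h0, zero_mul]
  -- bilinear form expansion
  have hbil : ∀ a b : Fin N → ℝ, a ⬝ᵥ Qε *ᵥ b = (Q *ᵥ a) ⬝ᵥ (Q *ᵥ b) + ε * (a ⬝ᵥ b) := by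
    intro a b
    rw [hQε, Matrix.add_mulVec, dotProduct_add, ← Matrix.mulVec_mulVec,
      Matrix.dotProduct_mulVec, Matrix.vecMul_transpose, Matrix.smul_mulVec,
      Matrix.one_mulVec, dotProduct_smul, smul_eq_mul]
  have hsym : u ⬝ᵥ Qε *ᵥ vs = vs ⬝ᵥ Qε *ᵥ u := by
    rw [hbil, hbil, dotProduct_comm, dotProduct_comm u vs]
  have hself : ∀ {k : ℕ} (z : Fin k → ℝ), 0 ≤ z ⬝ᵥ z := fun z =>
    Finset.sum_nonneg fun i _ => mul_self_nonneg _
  have hpsd : 0 ≤ (u - vs) ⬝ᵥ Qε *ᵥ (u - vs) := by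
    rw [hbil]
    have := hself (Q *ᵥ (u - vs))
    have := hself (u - vs)
    nlinarith
  have hexp : (u - vs) ⬝ᵥ Qε *ᵥ (u - vs)
      = u ⬝ᵥ Qε *ᵥ u - 2 * (vs ⬝ᵥ Qε *ᵥ u) + vs ⬝ᵥ Qε *ᵥ vs := by
    rw [Matrix.mulVec_sub, sub_dotProduct, dotProduct_sub, dotProduct_sub, hsym]
    ring
  have hlin' : ∑ i, g i * (u i - vs i)
      = (vs ⬝ᵥ Qε *ᵥ u - p ⬝ᵥ u) - (vs ⬝ᵥ Qε *ᵥ vs - p ⬝ᵥ vs) := by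
    have h1 : ∑ i, g i * (u i - vs i) = g ⬝ᵥ u - g ⬝ᵥ vs := by
      simp only [dotProduct, ← Finset.sum_sub_distrib]
      exact Finset.sum_congr rfl fun i _ => by ring
    rw [h1, hg]
    simp only [sub_dotProduct]
    rw [dotProduct_comm (Qε *ᵥ vs) u, hsym, dotProduct_comm (Qε *ᵥ vs) vs,
      dotProduct_comm p u, dotProduct_comm p vs]
  rw [hexp] at hpsd
  rw [hlin'] at hlin
  linarith
end
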